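/- For a graph G on n ≥ 3 vertices, the third largest signless Laplacian eigenvalue satisfies γ₃(G) ≥ d₃(G) − √2, where d₃(G) is the third largest vertex degree. -/

import Mathlib

open Matrix SimpleGraph Polynomial

/-- The signless Laplacian matrix Q(G) = D(G) + A(G). -/
noncomputable def signlessLaplacian {V : Type*} [Fintype V] [DecidableEq V]
    (G : SimpleGraph V) [DecidableRel G.Adj] : Matrix V V ℝ :=
  Matrix.diagonal (fun v => (G.degree v : ℝ)) + G.adjMatrix ℝ

/-- Eigenvalues (roots of the characteristic polynomial, with multiplicity),
sorted in non-increasing order. -/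
noncomputable def eigsDesc {V : Type*} [Fintype V] [DecidableEq V] (M : Matrix V V ℝ) : List ℝ :=
  (M.charpoly.roots.sort (· ≤ ·)).reverse

/-- Vertex degrees sorted in non-increasing order. -/
noncomputable def degsDesc {V : Type*} [Fintype V] [DecidableEq V]
    (G : SimpleGraph V) [DecidableRel G.Adj] : List ℕ :=
  ((Finset.univ.val.map fun v => G.degree v).sort (· ≤ ·)).reverse

/-! Pick three vertices of degree `≥ d₃`. The corresponding principal `3 × 3` submatrix of `Q`
is `D' + B` with `D' ≥ d₃` diagonal and `B` the adjacency matrix of a graph on three vertices,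
whose least eigenvalue is `≥ -√2`; so the quadratic form of `Q` is `≥ (d₃ - √2) ‖y‖²` on a
3-dimensional coordinate subspace. Such a subspace meets the span of the eigenvectors with
eigenvalue `< d₃ - √2` trivially, hence at least three eigenvalues of `Q` are `≥ d₃ - √2`
(the easy half of Courant–Fischer, i.e. of Cauchy interlacing). -/

theorem List.Pairwise.le_getD_iff_lt_countP {α : Type*} [LinearOrder α] {l : List α}
    (hl : l.Pairwise (· ≥ ·)) {k : ℕ} (hk : k < l.length) (c d : α) :
    c ≤ l.getD k d ↔ k < l.countP (c ≤ ·) := by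
  induction l generalizing k with
  | nil => simp at hk
  | cons a t ih =>
    have hta : ∀ x ∈ t, x ≤ a := (List.pairwise_cons.mp hl).1
    by_cases hca : c ≤ a
    · cases k with
      | zero => simp [hca]
      | succ k =>
        simp only [List.getD_cons_succ, List.countP_cons, hca, decide_true, if_true]
        rw [ih hl.of_cons (by simpa using hk)]
        omega
    · have hzero : t.countP (c ≤ ·) = 0 :=
        List.countP_eq_zero.mpr fun x hx => by simpa using (hta x hx).trans_lt (not_le.mp hca)
      have hget : ¬ c ≤ (a :: t).getD k d := by
        cases k with
        | zero => simpa using hca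
        | succ k =>
          have hk' : k < t.length := by simpa using hk
          rw [List.getD_cons_succ, List.getD_eq_getElem _ _ hk']
          exact fun h => hca (h.trans (hta _ (List.getElem_mem hk')))
      simp only [hget, false_iff, not_lt, List.countP_cons, hca, hzero, decide_false]
      simp

theorem Multiset.le_getD_sort_reverse_iff {α : Type*} [LinearOrder α] (s : Multiset α) {k : ℕ}
    (hk : k < Multiset.card s) (c d : α) :
    c ≤ (s.sort (· ≤ ·)).reverse.getD k d ↔ k < s.countP (c ≤ ·) := by
  rw [(List.pairwise_reverse.mpr (s.pairwise_sort _)).le_getD_iff_lt_countP (by simpa) c d,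
    List.countP_reverse, ← Multiset.coe_countP, Multiset.sort_eq]

namespace LinearMap.IsSymmetric

open Module

variable {𝕜 E : Type*} [RCLike 𝕜] [NormedAddCommGroup E] [InnerProductSpace 𝕜 E]
  [FiniteDimensional 𝕜 E] {T : E →ₗ[𝕜] E} (hT : T.IsSymmetric) {n : ℕ} (hn : finrank 𝕜 E = n)

theorem re_inner_apply_self_eq_sum (x : E) :
    RCLike.re (inner 𝕜 (T x) x) =
      ∑ i, hT.eigenvalues hn i * ‖(hT.eigenvectorBasis hn).repr x i‖ ^ 2 := by
  rw [← (hT.eigenvectorBasis hn).repr.inner_map_map, PiLp.inner_apply, map_sum]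
  refine Finset.sum_congr rfl fun i _ => ?_
  rw [hT.eigenvectorBasis_apply_self_apply, RCLike.inner_apply, map_mul (starRingEnd 𝕜),
    RCLike.conj_ofReal, mul_left_comm, RCLike.mul_conj, ← RCLike.ofReal_pow, ← RCLike.ofReal_mul,
    RCLike.ofReal_re]

theorem finrank_le_card_le_eigenvalues {W : Submodule 𝕜 E} {c : ℝ}
    (hW : ∀ x ∈ W, c * ‖x‖ ^ 2 ≤ RCLike.re (inner 𝕜 (T x) x)) :
    finrank 𝕜 W ≤ (Finset.univ.filter fun i => c ≤ hT.eigenvalues hn i).card := by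
  set b := hT.eigenvectorBasis hn
  -- A vector of `W` is determined by its coordinates along the eigenvectors with eigenvalue `≥ c`.
  let coords : W →ₗ[𝕜] ({i // c ≤ hT.eigenvalues hn i} → 𝕜) :=
    LinearMap.funLeft 𝕜 𝕜 Subtype.val ∘ₗ (WithLp.linearEquiv 2 𝕜 (Fin n → 𝕜)).toLinearMap ∘ₗ
      b.repr.toLinearMap ∘ₗ W.subtype
  have hcoords : Function.Injective coords := by
    refine (injective_iff_map_eq_zero coords).mpr fun x hx => ?_
    have hzero : ∀ i, c ≤ hT.eigenvalues hn i → b.repr x i = 0 := fun i hi =>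
      congr_fun hx ⟨i, hi⟩
    have hterm : ∀ i, 0 ≤ (c - hT.eigenvalues hn i) * ‖b.repr x i‖ ^ 2 := fun i => by
      by_cases hi : c ≤ hT.eigenvalues hn i
      · simp [hzero i hi]
      · exact mul_nonneg (by linarith) (by positivity)
    have hsum : ∑ i, (c - hT.eigenvalues hn i) * ‖b.repr x i‖ ^ 2 ≤ 0 := by
      have := hW x x.2
      rw [hT.re_inner_apply_self_eq_sum hn, ← b.repr.norm_map, EuclideanSpace.norm_sq_eq,
        Finset.mul_sum] at this
      simpa [sub_mul] using this
    have hrepr : b.repr x = 0 := by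
      ext i
      by_cases hi : c ≤ hT.eigenvalues hn i
      · exact hzero i hi
      · have := (Finset.sum_eq_zero_iff_of_nonneg fun i _ => hterm i).mp
          (le_antisymm hsum (Finset.sum_nonneg fun i _ => hterm i)) i (Finset.mem_univ i)
        simpa [show c - hT.eigenvalues hn i ≠ 0 by linarith] using this
    simpa using hrepr
  calc finrank 𝕜 W ≤ finrank 𝕜 ({i // c ≤ hT.eigenvalues hn i} → 𝕜) :=
        LinearMap.finrank_le_finrank_of_injective hcoords
    _ = _ := by rw [Module.finrank_fintype_fun_eq_card, Fintype.card_subtype]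

end LinearMap.IsSymmetric

namespace Function.Injective

variable {m n R : Type*} [Fintype m] [Fintype n] [CommSemiring R] {f : m → n}

theorem extend_zero_dotProduct (hf : Injective f) (y : m → R) (g : n → R) :
    extend f y 0 ⬝ᵥ g = y ⬝ᵥ (g ∘ f) := by
  classical
  rw [dotProduct, ← Finset.sum_subset (Finset.subset_univ (Finset.univ.map ⟨f, hf⟩)),
    Finset.sum_map]
  · simp [dotProduct, hf.extend_apply]
  · intro i _ hi
    rw [extend_apply' _ _ _ (by simpa using hi), Pi.zero_apply, zero_mul]

theorem extend_zero_dotProduct_mulVec (hf : Injective f) (y : m → R) (A : Matrix n n R) :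
    extend f y 0 ⬝ᵥ (A *ᵥ extend f y 0) = y ⬝ᵥ (A.submatrix f f *ᵥ y) := by
  rw [hf.extend_zero_dotProduct]
  congr 1
  ext a
  rw [comp_apply, mulVec, dotProduct_comm, hf.extend_zero_dotProduct, mulVec, dotProduct_comm]
  rfl

end Function.Injective

theorem Matrix.IsHermitian.card_le_card_le_eigenvalues₀ {m n : Type*} [Fintype m] [Fintype n]
    [DecidableEq n] {A : Matrix n n ℝ} (hA : A.IsHermitian) {f : m → n}
    (hf : Function.Injective f) {c : ℝ}
    (h : ∀ y, c * (y ⬝ᵥ y) ≤ y ⬝ᵥ (A.submatrix f f *ᵥ y)) :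
    Fintype.card m ≤ (Finset.univ.filter fun i => c ≤ hA.eigenvalues₀ i).card := by
  let ι : (m → ℝ) →ₗ[ℝ] EuclideanSpace ℝ n :=
    (WithLp.linearEquiv 2 ℝ (n → ℝ)).symm.toLinearMap ∘ₗ Function.ExtendByZero.linearMap ℝ f
  have hι : Function.Injective ι := fun y z hyz => by
    have := congr_arg (fun x : EuclideanSpace ℝ n => x ∘ f) hyz
    simpa [ι, Function.comp_def, hf.extend_apply] using this
  calc Fintype.card m = Module.finrank ℝ (LinearMap.range ι) := by
        rw [LinearMap.finrank_range_of_inj hι, Module.finrank_fintype_fun_eq_card]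
    _ ≤ _ := (isSymmetric_toEuclideanLin_iff.mpr hA).finrank_le_card_le_eigenvalues
        finrank_euclideanSpace ?_
  rintro _ ⟨y, rfl⟩
  have hnorm := hf.extend_zero_dotProduct y (Function.extend f y 0)
  rw [show Function.extend f y 0 ∘ f = y from _root_.funext (hf.extend_apply y 0)] at hnorm
  rw [← real_inner_self_eq_norm_sq, RCLike.re_to_real, EuclideanSpace.inner_eq_star_dotProduct,
    EuclideanSpace.inner_eq_star_dotProduct]
  change c * (Function.extend f y 0 ⬝ᵥ star (Function.extend f y 0)) ≤
    Function.extend f y 0 ⬝ᵥ star (A *ᵥ Function.extend f y 0)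
  rw [star_trivial, star_trivial, hnorm, hf.extend_zero_dotProduct_mulVec]
  exact h y

/-- The path on three vertices is the extremal case: its least eigenvalue is `-√2`. -/
theorem Matrix.IsAdjMatrix.neg_sqrt_two_mul_dotProduct_le {B : Matrix (Fin 3) (Fin 3) ℝ}
    (hB : B.IsAdjMatrix) (y : Fin 3 → ℝ) : -√2 * (y ⬝ᵥ y) ≤ y ⬝ᵥ (B *ᵥ y) := by
  have hs : √2 ^ 2 = 2 := Real.sq_sqrt zero_le_two
  have hs1 := Real.one_lt_sqrt_two
  simp only [dotProduct, mulVec, Fin.sum_univ_three, hB.apply_diag, hB.symm.apply 0 1,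
    hB.symm.apply 0 2, hB.symm.apply 1 2]
  rcases hB.zero_or_one 0 1 with h01 | h01 <;> rcases hB.zero_or_one 0 2 with h02 | h02 <;>
    rcases hB.zero_or_one 1 2 with h12 | h12 <;> simp only [h01, h02, h12]
  all_goals nlinarith [sq_nonneg (√2 * y 0 + y 1 + y 2), sq_nonneg (√2 * y 1 + y 0 + y 2),
    sq_nonneg (√2 * y 2 + y 0 + y 1), sq_nonneg (y 0 - y 1), sq_nonneg (y 0 - y 2),
    sq_nonneg (y 1 - y 2), sq_nonneg (y 0 + y 1 + y 2), sq_nonneg (y 0 + y 1),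
    sq_nonneg (y 0 + y 2), sq_nonneg (y 1 + y 2), sq_nonneg (y 0), sq_nonneg (y 1), sq_nonneg (y 2)]

section SignlessLaplacian

variable {V : Type*} [Fintype V] [DecidableEq V] (G : SimpleGraph V) [DecidableRel G.Adj]

theorem isHermitian_signlessLaplacian : (signlessLaplacian G).IsHermitian :=
  (isHermitian_diagonal _).add (G.isHermitian_adjMatrix ℝ)

theorem sub_sqrt_two_mul_le_dotProduct_signlessLaplacian_submatrix (f : Fin 3 ↪ V) {d : ℝ}
    (hd : ∀ a, d ≤ G.degree (f a)) (y : Fin 3 → ℝ) :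
    (d - √2) * (y ⬝ᵥ y) ≤ y ⬝ᵥ ((signlessLaplacian G).submatrix f f *ᵥ y) := by
  have hsplit : (signlessLaplacian G).submatrix f f =
      diagonal ((fun v => (G.degree v : ℝ)) ∘ f) + (G.adjMatrix ℝ).submatrix f f := by
    rw [signlessLaplacian, ← submatrix_diagonal_embedding]
    rfl
  rw [hsplit, add_mulVec, dotProduct_add]
  have hdeg : d * (y ⬝ᵥ y) ≤ y ⬝ᵥ (diagonal ((fun v => (G.degree v : ℝ)) ∘ f) *ᵥ y) := by
    simp only [dotProduct, mulVec_diagonal, Finset.mul_sum, Function.comp_apply]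
    refine Finset.sum_le_sum fun a _ => ?_
    nlinarith [hd a, mul_self_nonneg (y a)]
  have hadj := ((G.isAdjMatrix_adjMatrix ℝ).submatrix f).neg_sqrt_two_mul_dotProduct_le y
  linarith

end SignlessLaplacian

theorem stmt_17 {V : Type*} [Fintype V] [DecidableEq V] (G : SimpleGraph V)
    [DecidableRel G.Adj] (hn : 3 ≤ Fintype.card V) :
    ((degsDesc G).getD 2 0 : ℝ) - Real.sqrt 2
      ≤ (eigsDesc (signlessLaplacian G)).getD 2 0 := by
  set d₃ := (degsDesc G).getD 2 0
  have hQ := isHermitian_signlessLaplacian G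
  have hdeg : 2 < (Finset.univ.filter fun v => d₃ ≤ G.degree v).card := by
    have := ((Finset.univ.val.map fun v => G.degree v).le_getD_sort_reverse_iff
      (by rw [Multiset.card_map]; exact hn) d₃ 0).mp le_rfl
    rwa [Multiset.countP_map] at this
  obtain ⟨f⟩ := Function.Embedding.nonempty_of_card_le (α := Fin 3) (β := {v // d₃ ≤ G.degree v})
    (by rw [Fintype.card_fin, Fintype.card_subtype]; exact hdeg)
  have heig := hQ.card_le_card_le_eigenvalues₀ (f.trans (Function.Embedding.subtype _)).injective
    (sub_sqrt_two_mul_le_dotProduct_signlessLaplacian_submatrix G _ fun a =>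
      Nat.cast_le.mpr (f a).2)
  rw [eigsDesc, hQ.roots_charpoly_eq_eigenvalues₀, RCLike.ofReal_real_eq_id, Function.id_comp,
    Multiset.le_getD_sort_reverse_iff _ (by simpa [Nat.lt_iff_add_one_le] using hn),
    Multiset.countP_map]
  exact heig
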